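/- arXiv:1308.5120 — 2 statements merged into one kernel-verified Lean document; each statement's English description precedes it below -/
import Mathlib

section
/- Let (X,d) be a metric space, let o, a, b ∈ X and let t₁, t₂ ∈ [0,1]. Suppose p ∈ X is a CAT(0) comparison point at parameter t₁ for the pair (o,a), and q ∈ X is a CAT(0) comparison point at parameter t₂ for the pair (o,b). Then d(p,q)² ≤ t₁(t₁−t₂)·d(o,a)² + t₂(t₂−t₁)·d(o,b)² + t₁t₂·d(a,b)². -/
/-- `p` is a CAT(0) comparison point at parameter `t` for the pair `(o, y)`:
the negative curvature inequality satisfied by the point at parameter `t` on the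
geodesic segment `[o, y]` in any CAT(0) space. -/
def IsCAT0ComparisonPoint {X : Type*} [MetricSpace X] (o y : X) (t : ℝ) (p : X) : Prop :=
  ∀ z : X, dist z p ^ 2 ≤ (1 - t) * dist z o ^ 2 + t * dist z y ^ 2 - t * (1 - t) * dist o y ^ 2

/-! The comparison inequality for `q` at `z = p` is bounded by the comparison inequalities for `p`
at `z = o` and `z = b`, taken with the nonnegative weights `1 - t₂` and `t₂`; the result simplifies
to the claimed bound. -/

namespace IsCAT0ComparisonPoint

variable {X : Type*} [MetricSpace X] {o y p : X} {t : ℝ}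

theorem dist_sq_le (hp : IsCAT0ComparisonPoint o y t p) (z : X) :
    dist p z ^ 2 ≤ (1 - t) * dist o z ^ 2 + t * dist y z ^ 2 - t * (1 - t) * dist o y ^ 2 := by
  simpa only [dist_comm z] using hp z

theorem dist_left_sq_le (hp : IsCAT0ComparisonPoint o y t p) :
    dist p o ^ 2 ≤ t ^ 2 * dist o y ^ 2 := by
  have h := hp.dist_sq_le o
  rw [dist_self, dist_comm y o] at h
  linarith

end IsCAT0ComparisonPoint

theorem cat0_two_geodesics_estimate_general {X : Type*} [MetricSpace X]
    (o a b p q : X) (t₁ t₂ : ℝ)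
    (ht₂ : t₂ ∈ Set.Icc (0 : ℝ) 1)
    (hp : IsCAT0ComparisonPoint o a t₁ p) (hq : IsCAT0ComparisonPoint o b t₂ q) :
    dist p q ^ 2 ≤ t₁ * (t₁ - t₂) * dist o a ^ 2 + t₂ * (t₂ - t₁) * dist o b ^ 2
      + t₁ * t₂ * dist a b ^ 2 := by
  obtain ⟨ht₂₀, ht₂₁⟩ := ht₂
  have h₁ : 0 ≤ 1 - t₂ := sub_nonneg.2 ht₂₁
  calc dist p q ^ 2
      ≤ (1 - t₂) * dist p o ^ 2 + t₂ * dist p b ^ 2 - t₂ * (1 - t₂) * dist o b ^ 2 := hq p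
    _ ≤ (1 - t₂) * (t₁ ^ 2 * dist o a ^ 2)
          + t₂ * ((1 - t₁) * dist o b ^ 2 + t₁ * dist a b ^ 2 - t₁ * (1 - t₁) * dist o a ^ 2)
          - t₂ * (1 - t₂) * dist o b ^ 2 := by
        gcongr
        · exact hp.dist_left_sq_le
        · exact hp.dist_sq_le b
    _ = t₁ * (t₁ - t₂) * dist o a ^ 2 + t₂ * (t₂ - t₁) * dist o b ^ 2
          + t₁ * t₂ * dist a b ^ 2 := by ring

theorem cat0_two_geodesics_estimate {X : Type*} [MetricSpace X]
    (o a b p q : X) (t₁ t₂ : ℝ)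
    (ht₁ : t₁ ∈ Set.Icc (0 : ℝ) 1) (ht₂ : t₂ ∈ Set.Icc (0 : ℝ) 1)
    (hp : IsCAT0ComparisonPoint o a t₁ p) (hq : IsCAT0ComparisonPoint o b t₂ q) :
    dist p q ^ 2 ≤ t₁ * (t₁ - t₂) * dist o a ^ 2 + t₂ * (t₂ - t₁) * dist o b ^ 2
      + t₁ * t₂ * dist a b ^ 2 :=
  cat0_two_geodesics_estimate_general o a b p q t₁ t₂ ht₂ hp hq
end

section
/- Let E be a finite-dimensional real inner product space, let W be a finite group of linear isometries of E, and let λ ∈ E. Let (x_n)_{n≥0} be a sequence in E such that ‖x_{n+1} − x_n‖/n → 0 as n → ∞, and such that there exists a sequence (w_n)_{n≥0} of elements of W with ‖x_n − n·w_n(λ)‖/n → 0 as n → ∞. Then there exists a single element w ∈ W such that ‖x_n − n·w(λ)‖/n → 0 as n → ∞; moreover the sequence (w_n(λ))_{n≥0} is eventually constant. -/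
/-!
Put `v n = w n l₀`. Since `(n + 1) v (n + 1) - n v n` differs from `x (n + 1) - x n` by `o(n)`
and `v` is bounded, `n (v (n + 1) - v n) = o(n)`, so consecutive terms of `v` become arbitrarily
close. But `v` takes values in the finite orbit of `l₀`, whose distinct points are a fixed positive
distance apart; hence `v` is eventually constant.
-/

open Filter Topology Asymptotics Set

theorem eventuallyConst_of_finite_range_of_tendsto_edist {α : Type*} [EMetricSpace α]
    {u : ℕ → α} (hu : (range u).Finite)
    (h : Tendsto (fun n => edist (u (n + 1)) (u n)) atTop (𝓝 0)) :
    EventuallyConst u atTop := by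
  obtain ⟨C, hC, hsep⟩ := hu.relatively_discrete
  refine eventuallyConst_atTop_nat.2 (eventually_atTop.1 ?_)
  filter_upwards [h.eventually (gt_mem_nhds hC)] with n hn
  by_contra hne
  exact (hsep _ (mem_range_self _) _ (mem_range_self _) hne).not_gt hn

theorem isLittleO_natCast_of_tendsto_norm_div {E : Type*} [NormedAddCommGroup E] {f : ℕ → E}
    (h : Tendsto (fun n => ‖f n‖ / n) atTop (𝓝 0)) : f =o[atTop] (fun n => (n : ℝ)) := by
  refine isLittleO_norm_left.1 ((isLittleO_iff_tendsto' ?_).2 h)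
  filter_upwards [eventually_ne_atTop 0] with n hn h0
  exact absurd h0 (Nat.cast_ne_zero.2 hn)

theorem isLittleO_one_natCast : (fun _ : ℕ => (1 : ℝ)) =o[atTop] (fun n => (n : ℝ)) :=
  (isLittleO_one_left_iff ℝ).2 (tendsto_norm_atTop_atTop.comp tendsto_natCast_atTop_atTop)

theorem isBigO_natCast_succ : (fun n : ℕ => ((n + 1 : ℕ) : ℝ)) =O[atTop] (fun n => (n : ℝ)) := by
  simpa only [Nat.cast_succ] using (isBigO_refl _ _).add isLittleO_one_natCast.isBigO

theorem tendsto_succ_sub_of_isLittleO {E : Type*} [NormedAddCommGroup E] [NormedSpace ℝ E]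
    {x v : ℕ → E}
    (hx : (fun n => x (n + 1) - x n) =o[atTop] (fun n => (n : ℝ)))
    (hxv : (fun n => x n - (n : ℝ) • v n) =o[atTop] (fun n => (n : ℝ)))
    (hv : v =O[atTop] (fun _ => (1 : ℝ))) :
    Tendsto (fun n => v (n + 1) - v n) atTop (𝓝 0) := by
  have hxv_succ : (fun n => x (n + 1) - ((n + 1 : ℕ) : ℝ) • v (n + 1)) =o[atTop]
      (fun n => (n : ℝ)) :=
    (hxv.comp_tendsto (tendsto_add_atTop_nat 1)).trans_isBigO isBigO_natCast_succ
  have hv_succ : (fun n => v (n + 1)) =o[atTop] (fun n => (n : ℝ)) :=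
    (hv.comp_tendsto (tendsto_add_atTop_nat 1)).trans_isLittleO isLittleO_one_natCast
  have hsmul : (fun n : ℕ => (n : ℝ) • (v (n + 1) - v n)) =o[atTop] (fun n => (n : ℝ)) := by
    refine (((hxv.sub hxv_succ).add hx).sub hv_succ).congr_left fun n => ?_
    simp only [Nat.cast_succ, smul_sub, add_smul, one_smul]
    abel
  refine hsmul.tendsto_inv_smul_nhds_zero.congr' ?_
  filter_upwards [eventually_ne_atTop 0] with n hn
  rw [inv_smul_smul₀ (Nat.cast_ne_zero.2 hn)]

theorem regular_direction_stabilizes_general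
    {E : Type*} [NormedAddCommGroup E] [InnerProductSpace ℝ E]
    (W : Subgroup (E ≃ₗᵢ[ℝ] E)) [Finite W] (l₀ : E)
    (x : ℕ → E) (w : ℕ → W)
    (hstep : Tendsto (fun n : ℕ => ‖x (n + 1) - x n‖ / n) atTop (nhds 0))
    (happrox : Tendsto
      (fun n : ℕ => ‖x n - (n : ℝ) • ((w n : E ≃ₗᵢ[ℝ] E) l₀)‖ / n) atTop (nhds 0)) :
    ∃ w₀ ∈ W,
      Tendsto (fun n : ℕ => ‖x n - (n : ℝ) • (w₀ l₀)‖ / n) atTop (nhds 0) ∧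
      ∀ᶠ n in atTop, (w n : E ≃ₗᵢ[ℝ] E) l₀ = w₀ l₀ := by
  set v : ℕ → E := fun n => (w n : E ≃ₗᵢ[ℝ] E) l₀
  have hv_finite : (range v).Finite :=
    (finite_range _).subset (range_comp_subset_range w fun g : W => (g : E ≃ₗᵢ[ℝ] E) l₀)
  have hv_bdd : v =O[atTop] (fun _ => (1 : ℝ)) := isBigO_of_le' (c := ‖l₀‖) _ fun n => by simp [v]
  have hv_step : Tendsto (fun n => edist (v (n + 1)) (v n)) atTop (𝓝 0) := by
    simpa [edist_eq_enorm_sub] using (tendsto_succ_sub_of_isLittleO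
      (isLittleO_natCast_of_tendsto_norm_div hstep)
      (isLittleO_natCast_of_tendsto_norm_div happrox) hv_bdd).enorm
  obtain ⟨N, hN⟩ := eventuallyConst_atTop.1
    (eventuallyConst_of_finite_range_of_tendsto_edist hv_finite hv_step)
  refine ⟨w N, (w N).2, happrox.congr' ?_, eventually_atTop.2 ⟨N, hN⟩⟩
  filter_upwards [eventually_ge_atTop N] with n hn
  exact congrArg (fun y => ‖x n - (n : ℝ) • y‖ / n) (hN n hn)

theorem regular_direction_stabilizes
    {E : Type*} [NormedAddCommGroup E] [InnerProductSpace ℝ E] [FiniteDimensional ℝ E]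
    (W : Subgroup (E ≃ₗᵢ[ℝ] E)) [Finite W] (l₀ : E)
    (x : ℕ → E) (w : ℕ → W)
    (hstep : Tendsto (fun n : ℕ => ‖x (n + 1) - x n‖ / n) atTop (nhds 0))
    (happrox : Tendsto
      (fun n : ℕ => ‖x n - (n : ℝ) • ((w n : E ≃ₗᵢ[ℝ] E) l₀)‖ / n) atTop (nhds 0)) :
    ∃ w₀ ∈ W,
      Tendsto (fun n : ℕ => ‖x n - (n : ℝ) • (w₀ l₀)‖ / n) atTop (nhds 0) ∧
      ∀ᶠ n in atTop, (w n : E ≃ₗᵢ[ℝ] E) l₀ = w₀ l₀ :=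
  regular_direction_stabilizes_general W l₀ x w hstep happrox
end
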